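/- Let a, b, s, t be positive integers with a < s ≤ t, and assume either s < b, or s = b = t. Then for every ε > 0 there exists n₀ such that for all n ≥ n₀: (1-ε)·C(s-1,a)·C(n,b) ≤ ex(n, K_{a,b}, K_{s,t}) ≤ (1+ε)·C(s-1,a)·C(n,b), where C(m,k) denotes the binomial coefficient. -/

import Mathlib

open SimpleGraph

/-- `F` is contained in `G` as a subgraph, i.e. there is an injective graph
homomorphism from `F` to `G`. -/
def ContainsCopy {α β : Type*} (F : SimpleGraph α) (G : SimpleGraph β) : Prop :=
  ∃ f : F →g G, Function.Injective f

/-- `N(H,G)`: the number of subgraphs of `G` isomorphic to `H`. -/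
noncomputable def copyCount {α β : Type*} (H : SimpleGraph α) (G : SimpleGraph β) : ℕ :=
  Nat.card {G' : G.Subgraph // Nonempty (H ≃g G'.coe)}

/-- `ex(n,H,F)`: the maximum number of copies of `H` in an `F`-free graph on `n` vertices. -/
noncomputable def exGen (n : ℕ) {α β : Type*} (H : SimpleGraph α) (F : SimpleGraph β) : ℕ :=
  sSup {m | ∃ G : SimpleGraph (Fin n), ¬ ContainsCopy F G ∧ m = copyCount H G}

/-- The complete bipartite graph `K_{a,b}`. -/
abbrev Kbip (a b : ℕ) : SimpleGraph (Fin a ⊕ Fin b) := completeBipartiteGraph (Fin a) (Fin b)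

/-- `K̄_{a,b}`: obtained from `K_{a,b}` by adding all edges inside the part of size `a`. -/
def KbipBar (a b : ℕ) : SimpleGraph (Fin a ⊕ Fin b) :=
  SimpleGraph.fromRel (fun u _ => u.isLeft)

/-- `k` vertex-disjoint copies of `G`. -/
def disjCopies (k : ℕ) {α : Type*} (G : SimpleGraph α) : SimpleGraph (Fin k × α) :=
  SimpleGraph.fromRel (fun u v => u.1 = v.1 ∧ G.Adj u.2 v.2)

/-- The vertex-disjoint union of `G` and `H`. -/
def disjSum {α β : Type*} (G : SimpleGraph α) (H : SimpleGraph β) : SimpleGraph (α ⊕ β) :=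
  SimpleGraph.fromRel (fun u v =>
    (∃ x y, u = Sum.inl x ∧ v = Sum.inl y ∧ G.Adj x y) ∨
    (∃ x y, u = Sum.inr x ∧ v = Sum.inr y ∧ H.Adj x y))

/-- Placing a graph `G0` on the `Fin b`-part of the vertex set `Fin a ⊕ Fin b`. -/
def liftRight (a : ℕ) {b : ℕ} (G0 : SimpleGraph (Fin b)) : SimpleGraph (Fin a ⊕ Fin b) :=
  SimpleGraph.fromRel (fun u v => ∃ x y, u = Sum.inr x ∧ v = Sum.inr y ∧ G0.Adj x y)

/-
Upper bound. A copy of `K_{a,b}` is determined by its two sides, so it suffices to count pairs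
`(A, B)` with `|A| = a`, `|B| = b` and `A ⊆ N(B)`, the common neighbourhood of `B`. If
`|N(B)| < s`, then `B` carries at most `C(s-1, a)` choices of `A`. Otherwise `A` extends to an
`s`-set `S ⊆ N(B)`, and then `B ⊆ N(S)`, where `|N(S)| < t` because `G` is `K_{s,t}`-free;
so these pairs number at most `C(n, s) C(s, a) C(t-1, b)`. This error term is `o(C(n, b))`
when `s < b`, and vanishes when `s = b = t`.

Lower bound. Joining `s - 1` universal vertices to an independent set gives a `K_{s,t}`-free
graph (one side of any `K_{s,t}` would lie among the universal vertices) with at least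
`C(s-1, a) C(n-s+1, b) = (1 - o(1)) C(s-1, a) C(n, b)` copies of `K_{a,b}`.
-/

open Finset

theorem containsCopy_iff_isContained {α β : Type*} {F : SimpleGraph α} {G : SimpleGraph β} :
    ContainsCopy F G ↔ F ⊑ G :=
  ⟨fun ⟨f, hf⟩ => ⟨⟨f, hf⟩⟩, fun ⟨f⟩ => ⟨f.toHom, f.injective⟩⟩

theorem containsCopy_kbip_iff {V : Type*} {G : SimpleGraph V} {s t : ℕ} :
    ContainsCopy (Kbip s t) G ↔
      ∃ A B : Finset V, #A = s ∧ #B = t ∧ G.IsCompleteBetween A B := by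
  simp [containsCopy_iff_isContained, completeBipartiteGraph_isContained_iff]

theorem copyCount_eq_ncard_range_toSubgraph {α β : Type*} (H : SimpleGraph α)
    (G : SimpleGraph β) :
    _root_.copyCount H G = (Set.range (Copy.toSubgraph (A := H) (B := G))).ncard := by
  rw [Copy.range_toSubgraph, ← Nat.card_coe_set_eq]
  rfl

theorem Set.range_eq_coe_of_injective {α V : Type*} {g : α → V} (hg : Function.Injective g)
    {A : Finset V} (hA : #A = Nat.card α) (h : ∀ i, g i ∈ A) : Set.range g = A :=
  Set.eq_of_subset_of_ncard_le (Set.range_subset_iff.2 h) (by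
    rw [Set.ncard_coe_finset, Set.ncard_range_of_injective hg, hA])

namespace SimpleGraph

variable {V : Type*} {G : SimpleGraph V} {a b s t : ℕ}

def betweenSubgraph (G : SimpleGraph V) (A B : Set V) : G.Subgraph where
  verts := A ∪ B
  Adj x y := G.Adj x y ∧ (x ∈ A ∧ y ∈ B ∨ x ∈ B ∧ y ∈ A)
  adj_sub h := h.1
  edge_vert := by rintro x y ⟨-, ⟨hx, -⟩ | ⟨hx, -⟩⟩ <;> simp [hx]
  symm := ⟨fun _ _ h => ⟨h.1.symm, h.2.symm.imp And.symm And.symm⟩⟩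

theorem Copy.toSubgraph_eq_betweenSubgraph (f : Copy (Kbip a b) G) :
    f.toSubgraph = G.betweenSubgraph (Set.range (f ∘ Sum.inl)) (Set.range (f ∘ Sum.inr)) := by
  ext x y
  · simp [betweenSubgraph]
  · simp only [Subgraph.map_adj, betweenSubgraph]
    constructor
    · rintro ⟨u, v, huv, rfl, rfl⟩
      refine ⟨f.toHom.map_adj huv, ?_⟩
      rcases u with i | i <;> rcases v with j | j <;> simp_all
    · rintro ⟨-, ⟨⟨i, rfl⟩, ⟨j, rfl⟩⟩ | ⟨⟨i, rfl⟩, ⟨j, rfl⟩⟩⟩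
      · exact ⟨Sum.inl i, Sum.inr j, by simp, rfl, rfl⟩
      · exact ⟨Sum.inr i, Sum.inl j, by simp, rfl, rfl⟩

theorem betweenSubgraph_mem_range_toSubgraph {A B : Finset V} (hA : #A = a) (hB : #B = b)
    (h : G.IsCompleteBetween A B) :
    G.betweenSubgraph A B ∈ Set.range (Copy.toSubgraph (A := Kbip a b)) := by
  let f := Copy.completeBipartiteGraph (α := Fin a) (β := Fin b) A B (by simpa) (by simpa) h
  refine ⟨f, ?_⟩
  rw [f.toSubgraph_eq_betweenSubgraph,
    Set.range_eq_coe_of_injective (g := f ∘ Sum.inl) (f.injective.comp Sum.inl_injective)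
      (by simpa) (by simp [f, Copy.completeBipartiteGraph]),
    Set.range_eq_coe_of_injective (g := f ∘ Sum.inr) (f.injective.comp Sum.inr_injective)
      (by simpa) (by simp [f, Copy.completeBipartiteGraph])]

section Counting

variable [Fintype V] [DecidableEq V] [DecidableRel G.Adj]

variable (G) in
def commonNbhd (S : Finset V) : Finset V := {x | ∀ y ∈ S, G.Adj x y}

theorem subset_commonNbhd_iff {A B : Finset V} :
    A ⊆ G.commonNbhd B ↔ G.IsCompleteBetween A B := by
  simp [Finset.subset_iff, commonNbhd, IsCompleteBetween]

theorem subset_commonNbhd_comm {A B : Finset V} :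
    A ⊆ G.commonNbhd B ↔ B ⊆ G.commonNbhd A := by
  rw [subset_commonNbhd_iff, subset_commonNbhd_iff, isCompleteBetween_comm]

theorem card_commonNbhd_lt (hG : ¬ ContainsCopy (Kbip s t) G) {S : Finset V} (hS : #S = s) :
    #(G.commonNbhd S) < t := by
  by_contra! ht
  obtain ⟨T, hT, hTt⟩ := exists_subset_card_eq ht
  exact hG (containsCopy_kbip_iff.2 ⟨S, T, hS, hTt, (subset_commonNbhd_iff.1 hT).symm⟩)

variable (G) in
def completePairs (a b : ℕ) : Finset (Finset V × Finset V) :=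
  {p | #p.1 = a ∧ #p.2 = b ∧ p.1 ⊆ G.commonNbhd p.2}

theorem copyCount_kbip_le_card_completePairs :
    _root_.copyCount (Kbip a b) G ≤ #(G.completePairs a b) := by
  classical
  let φ := fun p : Finset V × Finset V => G.betweenSubgraph p.1 p.2
  have hsub : Set.range (Copy.toSubgraph (A := Kbip a b) (B := G)) ⊆
      ((G.completePairs a b).image φ : Set G.Subgraph) := by
    rintro _ ⟨f, rfl⟩
    have hinl := f.injective.comp Sum.inl_injective
    have hinr := f.injective.comp Sum.inr_injective
    refine mem_coe.2 (mem_image.2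
      ⟨(univ.image (f ∘ Sum.inl), univ.image (f ∘ Sum.inr)), ?_, ?_⟩)
    · simp only [completePairs, mem_filter, mem_univ, true_and]
      refine ⟨by simpa using card_image_of_injective univ hinl,
        by simpa using card_image_of_injective univ hinr, subset_commonNbhd_iff.2 ?_⟩
      simp only [coe_image, coe_univ, Set.image_univ]
      rintro _ ⟨i, rfl⟩ _ ⟨j, rfl⟩
      exact f.toHom.map_adj (by simp)
    · simp only [φ, coe_image, coe_univ, Set.image_univ]
      exact (f.toSubgraph_eq_betweenSubgraph).symm
  rw [copyCount_eq_ncard_range_toSubgraph]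
  exact (Set.ncard_le_ncard hsub).trans (by rw [Set.ncard_coe_finset]; exact card_image_le)

theorem card_filter_completePairs_lt_le (s : ℕ) :
    #{p ∈ G.completePairs a b | #(G.commonNbhd p.2) < s} ≤
      (s - 1).choose a * (Fintype.card V).choose b := by
  refine (card_le_mul_card_image_of_maps_to (f := Prod.snd)
    (t := (univ : Finset V).powersetCard b) ?_ ((s - 1).choose a) ?_).trans_eq (by simp)
  · intro p hp
    simp_all [completePairs]
  · intro B _
    obtain h | ⟨p, hp⟩ :=
      {p ∈ {p ∈ G.completePairs a b | #(G.commonNbhd p.2) < s} | p.2 = B}.eq_empty_or_nonempty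
    · simp [h]
    simp only [mem_filter] at hp
    calc _ ≤ #((G.commonNbhd B).powersetCard a) := by
          refine card_le_card_of_injOn Prod.fst ?_ ?_
          · intro q hq
            simp only [coe_filter, completePairs, mem_filter, mem_univ, true_and] at hq
            obtain ⟨⟨⟨hA, -, hAN⟩, -⟩, rfl⟩ := hq
            simpa [hA] using hAN
          · intro q hq q' hq' h
            simp only [coe_filter, mem_filter] at hq hq'
            exact Prod.ext h (hq.2.trans hq'.2.symm)
      _ ≤ (s - 1).choose a := by
          rw [card_powersetCard]
          exact Nat.choose_le_choose _ (by rw [← hp.2]; omega)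

theorem card_filter_completePairs_not_lt_le (hG : ¬ ContainsCopy (Kbip s t) G) (has : a ≤ s) :
    #{p ∈ G.completePairs a b | ¬ #(G.commonNbhd p.2) < s} ≤
      (Fintype.card V).choose s * (s.choose a * (t - 1).choose b) := by
  have := card_mul_le_card_mul (s := {p ∈ G.completePairs a b | ¬ #(G.commonNbhd p.2) < s})
    (t := (univ : Finset V).powersetCard s) (fun p S => p.1 ⊆ S ∧ S ⊆ G.commonNbhd p.2)
    (m := 1) (n := s.choose a * (t - 1).choose b) ?_ ?_
  · simpa using this
  · intro p hp
    simp only [mem_filter, completePairs, mem_univ, true_and, not_lt] at hp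
    obtain ⟨S, hAS, hSN, hS⟩ := exists_subsuperset_card_eq hp.1.2.2 (by omega) hp.2
    exact card_pos.2 ⟨S, by simp [hAS, hSN, hS]⟩
  · intro S hS
    rw [mem_powersetCard] at hS
    calc _ ≤ #(S.powersetCard a ×ˢ (G.commonNbhd S).powersetCard b) := by
          refine card_le_card fun p hp => ?_
          simp only [bipartiteBelow, mem_filter, completePairs, mem_univ, true_and] at hp
          simp only [mem_product, mem_powersetCard]
          exact ⟨⟨hp.2.1, hp.1.1.1⟩, subset_commonNbhd_comm.1 hp.2.2, hp.1.1.2.1⟩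
      _ ≤ s.choose a * (t - 1).choose b := by
          rw [card_product, card_powersetCard, card_powersetCard, hS.2]
          exact Nat.mul_le_mul_left _ (Nat.choose_le_choose _ (by
            have := card_commonNbhd_lt hG hS.2; omega))

theorem copyCount_kbip_le (hG : ¬ ContainsCopy (Kbip s t) G) (has : a ≤ s) :
    _root_.copyCount (Kbip a b) G ≤ (s - 1).choose a * (Fintype.card V).choose b +
      (Fintype.card V).choose s * (s.choose a * (t - 1).choose b) := by
  refine copyCount_kbip_le_card_completePairs.trans ?_
  rw [← card_filter_add_card_filter_not (fun p => #(G.commonNbhd p.2) < s)]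
  exact add_le_add (card_filter_completePairs_lt_le s)
    (card_filter_completePairs_not_lt_le hG has)

end Counting

/-- The join `K_C + K̄_{V ∖ C}`. -/
def cliqueJoin (C : Set V) : SimpleGraph V := SimpleGraph.fromRel fun u _ => u ∈ C

theorem cliqueJoin_adj {C : Set V} {u v : V} :
    (cliqueJoin C).Adj u v ↔ u ≠ v ∧ (u ∈ C ∨ v ∈ C) := by
  simp [cliqueJoin]

theorem not_containsCopy_kbip_cliqueJoin {C : Finset V} (hC : #C < s) (hst : s ≤ t) :
    ¬ ContainsCopy (Kbip s t) (cliqueJoin (C : Set V)) := by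
  rw [containsCopy_kbip_iff]
  rintro ⟨A, B, rfl, rfl, h⟩
  have : A ⊆ C ∨ B ⊆ C := by
    by_contra! hAB
    obtain ⟨⟨x, hxA, hxC⟩, ⟨y, hyB, hyC⟩⟩ := hAB.imp not_subset.1 not_subset.1
    simpa [hxC, hyC] using (cliqueJoin_adj.1 (h hxA hyB)).2
  obtain h | h := this <;> have := card_le_card h <;> omega

theorem card_mul_le_copyCount_kbip_cliqueJoin [Fintype V] (C : Finset V) :
    (#C).choose a * (Fintype.card V - #C).choose b ≤
      _root_.copyCount (Kbip a b) (cliqueJoin (C : Set V)) := by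
  classical
  set P := C.powersetCard a ×ˢ Cᶜ.powersetCard b
  have hsides : ∀ p ∈ P, (p.1 : Set V) ⊆ C ∧ Disjoint (p.2 : Set V) C := by
    intro p hp
    simp only [P, mem_product, mem_powersetCard] at hp
    exact ⟨coe_subset.2 hp.1.1, disjoint_coe.2 (subset_compl_iff_disjoint_right.1 hp.2.1)⟩
  set φ := fun p : Finset V × Finset V => (cliqueJoin (C : Set V)).betweenSubgraph p.1 p.2
  -- the sides are recovered from the vertex set `A ∪ B` as its parts inside and outside `C`
  have hinj : Set.InjOn φ P := by
    intro p hp q hq h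
    have hv := congrArg Subgraph.verts h
    simp only [φ, betweenSubgraph] at hv
    obtain ⟨hpA, hpB⟩ := hsides p hp
    obtain ⟨hqA, hqB⟩ := hsides q hq
    refine Prod.ext (coe_injective ?_) (coe_injective ?_) <;> ext x <;>
    · have hx := Set.ext_iff.1 hv x
      have : x ∈ (p.2 : Set V) → x ∉ (C : Set V) := fun h => Set.disjoint_left.1 hpB h
      have : x ∈ (q.2 : Set V) → x ∉ (C : Set V) := fun h => Set.disjoint_left.1 hqB h
      simp only [Set.mem_union] at hx
      tauto
  have hsub : (P.image φ : Set (cliqueJoin (C : Set V)).Subgraph) ⊆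
      Set.range (Copy.toSubgraph (A := Kbip a b)) := by
    rw [coe_image]
    rintro _ ⟨p, hp, rfl⟩
    simp only [P, mem_coe, mem_product, mem_powersetCard] at hp
    refine betweenSubgraph_mem_range_toSubgraph hp.1.2 hp.2.2 fun x hx y hy => ?_
    have hxC : x ∈ C := hp.1.1 (mem_coe.1 hx)
    have hyC : y ∉ C := mem_compl.1 (hp.2.1 (mem_coe.1 hy))
    exact cliqueJoin_adj.2 ⟨fun h => hyC (h ▸ hxC), Or.inl (mem_coe.2 hxC)⟩
  have hP : #P = (#C).choose a * (Fintype.card V - #C).choose b := by simp [P, card_compl]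
  rw [copyCount_eq_ncard_range_toSubgraph, ← hP, ← card_image_of_injOn hinj,
    ← Set.ncard_coe_finset]
  exact Set.ncard_le_ncard hsub

end SimpleGraph

open Filter Asymptotics

theorem Nat.choose_isLittleO_choose {k b : ℕ} (hkb : k < b) :
    (fun n : ℕ => (n.choose k : ℝ)) =o[atTop] fun n => (n.choose b : ℝ) :=
  (isTheta_choose k).trans_isLittleO <|
    ((isLittleO_pow_pow_atTop_of_lt hkb).comp_tendsto tendsto_natCast_atTop_atTop).trans_isTheta
      (isTheta_choose b).symm

theorem Nat.eventually_mul_choose_le_mul_choose {k b : ℕ} (hkb : k < b) (K : ℝ) {ε : ℝ}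
    (hε : 0 < ε) : ∀ᶠ n : ℕ in atTop, K * n.choose k ≤ ε * n.choose b := by
  filter_upwards [((Nat.choose_isLittleO_choose hkb).const_mul_left K).bound hε] with n hn
  simpa [abs_of_nonneg] using (le_abs_self _).trans hn

theorem Nat.choose_le_choose_sub_add (n c b : ℕ) :
    n.choose b ≤ (n - c).choose b + c * n.choose (b - 1) := by
  induction c with
  | zero => simp
  | succ c ih =>
    rcases b with _ | b
    · simp
    have step : (n - c).choose (b + 1) ≤ (n - (c + 1)).choose (b + 1) + n.choose b := by
      rcases Nat.eq_zero_or_pos (n - c) with h | h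
      · simp [h]
      · rw [show n - c = n - (c + 1) + 1 by omega, Nat.choose_succ_succ']
        have := Nat.choose_le_choose b (show n - (c + 1) ≤ n by omega)
        omega
    rw [Nat.add_sub_cancel] at ih ⊢
    rw [Nat.succ_mul]
    omega

section ExGen

variable {n : ℕ} {α β : Type*} {H : SimpleGraph α} {F : SimpleGraph β}

theorem bddAbove_copyCount_of_free :
    BddAbove {m | ∃ G : SimpleGraph (Fin n), ¬ ContainsCopy F G ∧ m = _root_.copyCount H G} :=
  ((Set.finite_range fun G : SimpleGraph (Fin n) => _root_.copyCount H G).subset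
    (by rintro _ ⟨G, -, rfl⟩; exact ⟨G, rfl⟩)).bddAbove

theorem copyCount_le_exGen {G : SimpleGraph (Fin n)} (hG : ¬ ContainsCopy F G) :
    _root_.copyCount H G ≤ exGen n H F :=
  le_csSup bddAbove_copyCount_of_free ⟨G, hG, rfl⟩

theorem exGen_le {M : ℕ}
    (h : ∀ G : SimpleGraph (Fin n), ¬ ContainsCopy F G → _root_.copyCount H G ≤ M) :
    exGen n H F ≤ M :=
  csSup_le' (by rintro _ ⟨G, hG, rfl⟩; exact h G hG)

end ExGen

section Kbip

variable {n a b s t : ℕ}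

theorem exGen_kbip_le (has : a ≤ s) :
    exGen n (Kbip a b) (Kbip s t) ≤
      (s - 1).choose a * n.choose b + n.choose s * (s.choose a * (t - 1).choose b) :=
  exGen_le fun G hG => by classical simpa using G.copyCount_kbip_le hG has

theorem choose_mul_choose_le_exGen_kbip (hs : 0 < s) (hst : s ≤ t) (hn : s - 1 ≤ n) :
    (s - 1).choose a * (n - (s - 1)).choose b ≤ exGen n (Kbip a b) (Kbip s t) := by
  obtain ⟨C, -, hC⟩ :=
    exists_subset_card_eq (show s - 1 ≤ #(univ : Finset (Fin n)) by simpa using hn)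
  have := SimpleGraph.card_mul_le_copyCount_kbip_cliqueJoin (a := a) (b := b) C
  rw [hC, Fintype.card_fin] at this
  exact this.trans
    (copyCount_le_exGen (SimpleGraph.not_containsCopy_kbip_cliqueJoin (by omega) hst))

end Kbip

section Asymptotics

variable {a b s t : ℕ} {ε : ℝ}

theorem eventually_le_exGen_kbip (hb : 0 < b) (hs : 0 < s) (hst : s ≤ t) (hε : 0 < ε) :
    ∀ᶠ n : ℕ in atTop,
      (1 - ε) * (s - 1).choose a * n.choose b ≤ (exGen n (Kbip a b) (Kbip s t) : ℝ) := by
  filter_upwards [Nat.eventually_mul_choose_le_mul_choose (Nat.sub_lt hb one_pos)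
    ((s - 1 : ℕ) : ℝ) hε, eventually_ge_atTop (s - 1)] with n hloss hn
  have hlow : ((s - 1).choose a * (n - (s - 1)).choose b : ℝ) ≤
      exGen n (Kbip a b) (Kbip s t) := by
    exact_mod_cast choose_mul_choose_le_exGen_kbip (a := a) (b := b) hs hst hn
  have hpascal : (n.choose b : ℝ) ≤
      (n - (s - 1)).choose b + ((s - 1 : ℕ) : ℝ) * n.choose (b - 1) := by
    exact_mod_cast Nat.choose_le_choose_sub_add n (s - 1) b
  have hM : (0 : ℝ) ≤ (s - 1).choose a := Nat.cast_nonneg _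
  nlinarith

theorem eventually_exGen_kbip_le (has : a < s) (hcase : s < b ∨ (s = b ∧ b = t))
    (hε : 0 < ε) :
    ∀ᶠ n : ℕ in atTop,
      (exGen n (Kbip a b) (Kbip s t) : ℝ) ≤ (1 + ε) * (s - 1).choose a * n.choose b := by
  have hM : (0 : ℝ) < (s - 1).choose a := by exact_mod_cast Nat.choose_pos (by omega)
  have herr : ∀ᶠ n : ℕ in atTop,
      ((s.choose a * (t - 1).choose b : ℕ) : ℝ) * n.choose s ≤
        ε * (s - 1).choose a * n.choose b := by
    rcases hcase with hsb | ⟨rfl, rfl⟩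
    · filter_upwards [Nat.eventually_mul_choose_le_mul_choose hsb
        ((s.choose a * (t - 1).choose b : ℕ) : ℝ) (mul_pos hε hM)] with n hn
      linarith
    · refine Eventually.of_forall fun n => ?_
      rw [Nat.choose_eq_zero_of_lt (by omega : s - 1 < s), mul_zero, Nat.cast_zero, zero_mul]
      positivity
  filter_upwards [herr] with n herr
  have hup : (exGen n (Kbip a b) (Kbip s t) : ℝ) ≤
      (s - 1).choose a * n.choose b + n.choose s * (s.choose a * (t - 1).choose b : ℕ) := by
    exact_mod_cast exGen_kbip_le (n := n) (b := b) (t := t) has.le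
  linarith

end Asymptotics

theorem stmt1_general (a b s t : ℕ) (has : a < s) (hst : s ≤ t) (hcase : s < b ∨ (s = b ∧ b = t))
    (ε : ℝ) (hε : 0 < ε) :
    ∃ n₀ : ℕ, ∀ n ≥ n₀,
      (1 - ε) * (Nat.choose (s - 1) a) * (Nat.choose n b) ≤
        (exGen n (Kbip a b) (Kbip s t) : ℝ) ∧
      (exGen n (Kbip a b) (Kbip s t) : ℝ) ≤
        (1 + ε) * (Nat.choose (s - 1) a) * (Nat.choose n b) :=
  eventually_atTop.1 <|
    (eventually_le_exGen_kbip (by omega) (by omega) hst hε).and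
      (eventually_exGen_kbip_le has hcase hε)

/-- if `a < s ≤ t` and (`s < b` or `s = b = t`), then
`ex(n, K_{a,b}, K_{s,t}) = (1+o(1))·C(s-1,a)·C(n,b)`. -/
theorem stmt1 (a b s t : ℕ) (ha : 0 < a) (hb : 0 < b) (hs : 0 < s) (ht : 0 < t)
    (has : a < s) (hst : s ≤ t) (hcase : s < b ∨ (s = b ∧ b = t))
    (ε : ℝ) (hε : 0 < ε) :
    ∃ n₀ : ℕ, ∀ n ≥ n₀,
      (1 - ε) * (Nat.choose (s - 1) a) * (Nat.choose n b) ≤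
        (exGen n (Kbip a b) (Kbip s t) : ℝ) ∧
      (exGen n (Kbip a b) (Kbip s t) : ℝ) ≤
        (1 + ε) * (Nat.choose (s - 1) a) * (Nat.choose n b) :=
  stmt1_general a b s t has hst hcase ε hε
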